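/- For the query language CRPQ[=], there are constraints expressible in PG-Keys but not in mPG-Keys. In particular, the PG-Key φ = (x, ∅ ⇒ SINGLETON(y), x → y, ∅), asserting that every vertex has at most one out-neighbour, is not expressible by any finite set of mPG-Keys over CRPQ[=]. -/
import Mathlib


namespace PGC

/-- Objects (vertex/edge identifiers). -/
abbrev Obj := ℕ
/-- Labels. -/
abbrev Lab := ℕ
/-- Property keys. -/
abbrev Key := ℕ
/-- Data values. -/
abbrev Val := ℕ
/-- Variables. -/
abbrev Var := ℕ

/-- A property graph `G = (V, E, η, λ, π)`. -/
structure PGraph where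
  V : Finset Obj
  E : Finset Obj
  disj : Disjoint V E
  src : Obj → Obj
  tgt : Obj → Obj
  lab : Obj → Finset Lab
  prop : Obj → Key → Option Val
  src_mem : ∀ e ∈ E, src e ∈ V
  tgt_mem : ∀ e ∈ E, tgt e ∈ V

/-- A walk (path), given by its start vertex and its list of edges. -/
structure Walk where
  start : Obj
  edges : List Obj
deriving DecidableEq

/-- The list of edges forms a walk in `G` starting at the given vertex. -/
def PGraph.walkFrom (G : PGraph) : Obj → List Obj → Prop
  | u, [] => u ∈ G.V
  | u, e :: es => e ∈ G.E ∧ G.src e = u ∧ G.walkFrom (G.tgt e) es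

/-- The final vertex of a walk. -/
def Walk.endpt (G : PGraph) (w : Walk) : Obj :=
  w.edges.foldl (fun _ e => G.tgt e) w.start

/-- What a variable can be bound to: an object (vertex or edge) or a walk. -/
inductive Target where
  | obj (o : Obj)
  | walk (w : Walk)
deriving DecidableEq

/-- Atoms of conjunctive (regular path) queries. -/
inductive Atom where
  | vertex (x : Var) (ls : List Lab)
  | edge (x e y : Var) (ls : List Lab)
  | path (x p y : Var) (r : RegularExpression Lab)

def Atom.vars : Atom → Finset Var
  | .vertex x _ => {x}
  | .edge x e y _ => {x, e, y}
  | .path x p y _ => {x, p, y}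

def Atom.isPath : Atom → Prop
  | .path _ _ _ _ => True
  | _ => False

/-- A query is a finite conjunction of atoms. -/
abbrev Query := List Atom

/-- Variables of a query. -/
def qvars (Q : Query) : Finset Var := Q.foldr (fun a s => a.vars ∪ s) ∅

/-- Satisfaction of an atom by an assignment `h` in a property graph. -/
def Atom.sat (G : PGraph) (h : Var → Target) : Atom → Prop
  | .vertex x ls => ∃ o, h x = .obj o ∧ o ∈ G.V ∧ ∀ l ∈ ls, l ∈ G.lab o
  | .edge x e y ls => ∃ ox oe oy, h x = .obj ox ∧ h e = .obj oe ∧ h y = .obj oy ∧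
      oe ∈ G.E ∧ G.src oe = ox ∧ G.tgt oe = oy ∧ ∀ l ∈ ls, l ∈ G.lab oe
  | .path x p y r => ∃ ox w oy, h x = .obj ox ∧ h p = .walk w ∧ h y = .obj oy ∧
      w.start = ox ∧ G.walkFrom ox w.edges ∧ Walk.endpt G w = oy ∧
      ∃ word : List Lab, word ∈ r.matches' ∧
        List.Forall₂ (fun e l => l ∈ G.lab e) w.edges word

/-- A match of a query `Q` over `G` (all-walk semantics). -/
def Match (G : PGraph) (Q : Query) (h : Var → Target) : Prop :=
  ∀ a ∈ Q, a.sat G h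

/-- The property value `h(x).a`, if defined. -/
def propOf (G : PGraph) (h : Var → Target) (x : Var) (a : Key) : Option Val :=
  match h x with
  | .obj o => G.prop o a
  | .walk _ => none

/-- Data predicates. -/
inductive Pred where
  | propEq (x : Var) (a : Key) (y : Var) (b : Key)   -- x.a = y.b
  | propEqC (x : Var) (a : Key) (c : Val)            -- x.a = c
  | ex (x : Var) (a : Key)                           -- ex(x.a)
  | idEq (x y : Var)                                 -- x = y
  | propNe (x : Var) (a : Key) (y : Var) (b : Key)   -- x.a ≠ y.b
  | propNeC (x : Var) (a : Key) (c : Val)            -- x.a ≠ c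
  | idNe (x y : Var)                                 -- x ≠ y

/-- Satisfaction of a data predicate. -/
def Pred.sat (G : PGraph) (h : Var → Target) : Pred → Prop
  | .propEq x a y b => ∃ v, propOf G h x a = some v ∧ propOf G h y b = some v
  | .propEqC x a c => propOf G h x a = some c
  | .ex x a => (propOf G h x a).isSome
  | .idEq x y => h x = h y
  | .propNe x a y b => ∃ v w, propOf G h x a = some v ∧ propOf G h y b = some w ∧ v ≠ w
  | .propNeC x a c => ∃ v, propOf G h x a = some v ∧ v ≠ c
  | .idNe x y => h x ≠ h y

def Pred.vars : Pred → Finset Var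
  | .propEq x _ y _ => {x, y}
  | .propEqC x _ _ => {x}
  | .ex x _ => {x}
  | .idEq x y => {x, y}
  | .propNe x _ y _ => {x, y}
  | .propNeC x _ _ => {x}
  | .idNe x y => {x, y}

/-- `h ⊨ C`: every predicate of `C` holds under `h`. -/
def satC (G : PGraph) (h : Var → Target) (C : List Pred) : Prop :=
  ∀ p ∈ C, p.sat G h

/-- A predicate uses only equality (no inequality). -/
def Pred.isEq : Pred → Prop
  | .propEq _ _ _ _ => True
  | .propEqC _ _ _ => True
  | .ex _ _ => True
  | .idEq _ _ => True
  | _ => False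

/-- A predicate is an equality with a constant. -/
def Pred.isEqC : Pred → Prop
  | .propEqC _ _ _ => True
  | _ => False

/-- A query language: whether path atoms are allowed, and which data predicates are allowed. -/
structure QLang where
  allowPaths : Bool
  allowPred : Pred → Prop

/-- CQ[=] -/
def CQeq : QLang := ⟨false, Pred.isEq⟩
/-- CQ[=,≠] -/
def CQeqNe : QLang := ⟨false, fun _ => True⟩
/-- CRPQ[=] -/
def CRPQeq : QLang := ⟨true, Pred.isEq⟩
/-- CRPQ[=,≠] -/
def CRPQeqNe : QLang := ⟨true, fun _ => True⟩
/-- CRPQ[=_c] -/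
def CRPQeqC : QLang := ⟨true, Pred.isEqC⟩

/-- The query belongs to the query language. -/
def QueryIn (L : QLang) (Q : Query) : Prop :=
  ∀ a ∈ Q, a.isPath → L.allowPaths = true

/-- All predicates belong to the query language. -/
def PredsIn (L : QLang) (C : List Pred) : Prop :=
  ∀ p ∈ C, L.allowPred p

/-- Graph functional dependency `(Q(x̄,ȳ), C_s(x̄,ȳ) ⇒ C_t(x̄))`. -/
structure GFD where
  shared : List Var
  Q : Query
  Cs : List Pred
  Ct : List Pred

def GFD.wf (L : QLang) (φ : GFD) : Prop :=
  QueryIn L φ.Q ∧ PredsIn L φ.Cs ∧ PredsIn L φ.Ct ∧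
  φ.shared.toFinset ⊆ qvars φ.Q ∧
  (∀ p ∈ φ.Ct, p.vars ⊆ φ.shared.toFinset) ∧
  (∀ p ∈ φ.Cs, p.vars ⊆ qvars φ.Q)

def GFD.sat (φ : GFD) (G : PGraph) : Prop :=
  ∀ h, Match G φ.Q h → satC G h φ.Cs → satC G h φ.Ct

def GFD.allVars (φ : GFD) : Finset Var :=
  qvars φ.Q ∪ φ.shared.toFinset ∪ (φ.Cs ++ φ.Ct).foldr (fun p s => p.vars ∪ s) ∅

/-- Graph generating dependency `(Q_s(x̄,ȳ), C_s(x̄,ȳ) ⇒ Q_t(x̄,z̄), C_t(x̄,z̄))`. -/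
structure GGD where
  shared : List Var
  Qs : Query
  Cs : List Pred
  Qt : Query
  Ct : List Pred

def GGD.wf (L : QLang) (φ : GGD) : Prop :=
  QueryIn L φ.Qs ∧ QueryIn L φ.Qt ∧ PredsIn L φ.Cs ∧ PredsIn L φ.Ct ∧
  φ.shared.toFinset ⊆ qvars φ.Qs ∧
  qvars φ.Qs ∩ qvars φ.Qt ⊆ φ.shared.toFinset ∧
  (∀ p ∈ φ.Cs, p.vars ⊆ qvars φ.Qs) ∧
  (∀ p ∈ φ.Ct, p.vars ⊆ qvars φ.Qt ∪ φ.shared.toFinset)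

def GGD.sat (φ : GGD) (G : PGraph) : Prop :=
  ∀ hs, Match G φ.Qs hs → satC G hs φ.Cs →
    ∃ ht, Match G φ.Qt ht ∧ (∀ v ∈ φ.shared, ht v = hs v) ∧ satC G ht φ.Ct

/-- Assertion keywords of PG-Keys. -/
inductive KW where
  | mandatory
  | exclusive
  | singleton
deriving DecidableEq

/-- Entries of a key expression: a variable or a property reference `v.a`. -/
inductive KeyExpr where
  | var (v : Var)
  | ref (v : Var) (a : Key)

def KeyExpr.vars : KeyExpr → Finset Var
  | .var v => {v}
  | .ref v _ => {v}

/-- Value of a key-expression entry under a match, if defined. -/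
def KeyExpr.eval (G : PGraph) (h : Var → Target) : KeyExpr → Option (Target ⊕ Val)
  | .var v => some (Sum.inl (h v))
  | .ref v a => (propOf G h v a).map Sum.inr

def keysDefined (G : PGraph) (h : Var → Target) (ks : List KeyExpr) : Prop :=
  ∀ k ∈ ks, (KeyExpr.eval G h k).isSome

def keysEq (G : PGraph) (h h' : Var → Target) (ks : List KeyExpr) : Prop :=
  ∀ k ∈ ks, KeyExpr.eval G h k = KeyExpr.eval G h' k

/-- A PG-Key `(Q_s(x,ȳ), C_s ⇒ α(ν̄), Q_t(x,z̄), C_t)`. -/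
structure PGKey where
  x : Var
  Qs : Query
  Cs : List Pred
  kw : KW
  keys : List KeyExpr
  Qt : Query
  Ct : List Pred

def PGKey.wf (L : QLang) (ψ : PGKey) : Prop :=
  QueryIn L ψ.Qs ∧ QueryIn L ψ.Qt ∧ PredsIn L ψ.Cs ∧ PredsIn L ψ.Ct ∧
  ψ.x ∈ qvars ψ.Qs ∧ ψ.x ∈ qvars ψ.Qt ∧
  qvars ψ.Qs ∩ qvars ψ.Qt = {ψ.x} ∧
  (∀ p ∈ ψ.Cs, p.vars ⊆ qvars ψ.Qs) ∧
  (∀ p ∈ ψ.Ct, p.vars ⊆ qvars ψ.Qt) ∧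
  (∀ k ∈ ψ.keys, k.vars ⊆ qvars ψ.Qt)

def PGKey.sat (ψ : PGKey) (G : PGraph) : Prop :=
  match ψ.kw with
  | .mandatory =>
      ∀ hs, Match G ψ.Qs hs → satC G hs ψ.Cs →
        ∃ ht, Match G ψ.Qt ht ∧ ht ψ.x = hs ψ.x ∧ satC G ht ψ.Ct ∧
          keysDefined G ht ψ.keys
  | .singleton =>
      ∀ hs, Match G ψ.Qs hs → satC G hs ψ.Cs →
        ∀ ht ht', Match G ψ.Qt ht → satC G ht ψ.Ct → ht ψ.x = hs ψ.x →
          Match G ψ.Qt ht' → satC G ht' ψ.Ct → ht' ψ.x = hs ψ.x →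
          keysDefined G ht ψ.keys → keysDefined G ht' ψ.keys →
          keysEq G ht ht' ψ.keys
  | .exclusive =>
      ∀ hs hs', Match G ψ.Qs hs → satC G hs ψ.Cs →
        Match G ψ.Qs hs' → satC G hs' ψ.Cs →
        ∀ ht ht', Match G ψ.Qt ht → satC G ht ψ.Ct → ht ψ.x = hs ψ.x →
          Match G ψ.Qt ht' → satC G ht' ψ.Ct → ht' ψ.x = hs' ψ.x →
          keysDefined G ht ψ.keys → keysDefined G ht' ψ.keys →
          keysEq G ht ht' ψ.keys →
          hs ψ.x = hs' ψ.x

def PGKey.allVars (ψ : PGKey) : Finset Var :=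
  qvars ψ.Qs ∪ qvars ψ.Qt ∪
  (ψ.Cs ++ ψ.Ct).foldr (fun p s => p.vars ∪ s) ∅ ∪
  ψ.keys.foldr (fun k s => k.vars ∪ s) ∅ ∪ {ψ.x}

/-- Variable renaming on atoms, queries, predicates and key expressions. -/
def Atom.rename (σ : Var → Var) : Atom → Atom
  | .vertex x ls => .vertex (σ x) ls
  | .edge x e y ls => .edge (σ x) (σ e) (σ y) ls
  | .path x p y r => .path (σ x) (σ p) (σ y) r

def Query.rename (σ : Var → Var) (Q : Query) : Query := Q.map (Atom.rename σ)

def Pred.rename (σ : Var → Var) : Pred → Pred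
  | .propEq x a y b => .propEq (σ x) a (σ y) b
  | .propEqC x a c => .propEqC (σ x) a c
  | .ex x a => .ex (σ x) a
  | .idEq x y => .idEq (σ x) (σ y)
  | .propNe x a y b => .propNe (σ x) a (σ y) b
  | .propNeC x a c => .propNeC (σ x) a c
  | .idNe x y => .idNe (σ x) (σ y)

def KeyExpr.rename (σ : Var → Var) : KeyExpr → KeyExpr
  | .var v => .var (σ v)
  | .ref v a => .ref (σ v) a

/-- The existence predicates `ex(ν̄)` associated with a key expression. -/
def exPreds (ks : List KeyExpr) : List Pred :=
  ks.filterMap fun k =>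
    match k with
    | .var _ => none
    | .ref v a => some (.ex v a)

/-- The predicate expressing equality of a key-expression entry with its `σ`-copy. -/
def keyEqPred (σ : Var → Var) : KeyExpr → Pred
  | .var v => .idEq v (σ v)
  | .ref v a => .propEq v a (σ v) a

/-- The renaming that fixes `x` and otherwise applies `σ`. -/
def fixAt (x : Var) (σ : Var → Var) : Var → Var :=
  fun v => if v = x then x else σ v

/-- `G'` is an induced subgraph of `G`. -/
def InducedSubgraph (G' G : PGraph) : Prop :=
  G'.V ⊆ G.V ∧
  G'.E = G.E.filter (fun e => G.src e ∈ G'.V ∧ G.tgt e ∈ G'.V) ∧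
  ∀ o ∈ G'.V ∪ G'.E, G'.src o = G.src o ∧ G'.tgt o = G.tgt o ∧
    G'.lab o = G.lab o ∧ ∀ k, G'.prop o k = G.prop o k

/-- A constraint (given by its satisfaction relation) is expressible by a
finite set of constraints of the class `C`. -/
def Expressible (s : PGraph → Prop) (C : Set (PGraph → Prop)) : Prop :=
  ∃ Ψ : List (PGraph → Prop), (∀ ψ ∈ Ψ, ψ ∈ C) ∧ ∀ G, s G ↔ ∀ ψ ∈ Ψ, ψ G

/-- Expressiveness inclusion of constraint classes. -/
def ClassLE (C₁ C₂ : Set (PGraph → Prop)) : Prop :=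
  ∀ s ∈ C₁, Expressible s C₂

/-- Equal expressive power. -/
def ClassEquiv (C₁ C₂ : Set (PGraph → Prop)) : Prop :=
  ClassLE C₁ C₂ ∧ ClassLE C₂ C₁

/-- Strict expressiveness inclusion. -/
def ClassLT (C₁ C₂ : Set (PGraph → Prop)) : Prop :=
  ClassLE C₁ C₂ ∧ ∃ s ∈ C₂, ¬ Expressible s C₁

/-- The class GFD over the query language `L`. -/
def GFDc (L : QLang) : Set (PGraph → Prop) :=
  {s | ∃ φ : GFD, φ.wf L ∧ s = φ.sat}

/-- The class nGFD over `L`. -/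
def nGFDc (n : ℕ) (L : QLang) : Set (PGraph → Prop) :=
  {s | ∃ φ : GFD, φ.wf L ∧ φ.shared.length ≤ n ∧ s = φ.sat}

/-- The class GGD over `L`. -/
def GGDc (L : QLang) : Set (PGraph → Prop) :=
  {s | ∃ φ : GGD, φ.wf L ∧ s = φ.sat}

/-- The class nGGD over `L`. -/
def nGGDc (n : ℕ) (L : QLang) : Set (PGraph → Prop) :=
  {s | ∃ φ : GGD, φ.wf L ∧ φ.shared.length ≤ n ∧ s = φ.sat}

/-- The class PG-Keys over `L`. -/
def PGKc (L : QLang) : Set (PGraph → Prop) :=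
  {s | ∃ ψ : PGKey, ψ.wf L ∧ s = ψ.sat}

/-- The class mPG-Keys over `L`. -/
def mPGKc (L : QLang) : Set (PGraph → Prop) :=
  {s | ∃ ψ : PGKey, ψ.wf L ∧ ψ.kw = KW.mandatory ∧ s = ψ.sat}


/-- The PG-Key `φ = (x, ∅ ⇒ SINGLETON(y), x → y, ∅)`, with `x = 0`, `y = 1` and edge
variable `2`; it asserts that every vertex has at most one out-neighbour. -/
def singletonKey : PGKey :=
  ⟨0, [Atom.vertex 0 []], [], KW.singleton, [KeyExpr.var 1], [Atom.edge 0 2 1 []], []⟩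

/-! ### Auxiliary development for the inexpressibility proof -/

/-- Apply an object map to a target. -/
def mapT (g : Obj → Obj) : Target → Target
  | .obj o => .obj (g o)
  | .walk w => .walk ⟨g w.start, w.edges.map g⟩

/-- The "good" graph: a single edge `0 → 1` (edge id `4`). -/
def Ggood : PGraph where
  V := {0, 1}
  E := {4}
  disj := by decide
  src := fun _ => 0
  tgt := fun _ => 1
  lab := fun _ => ∅
  prop := fun _ _ => none
  src_mem := by decide
  tgt_mem := by decide

/-- The "bad" graph: edges `0 → 1` and `0 → 2` (edge ids `4`, `5`). -/
def Gbad : PGraph where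
  V := {0, 1, 2}
  E := {4, 5}
  disj := by decide
  src := fun _ => 0
  tgt := fun e => if e = 4 then 1 else 2
  lab := fun _ => ∅
  prop := fun _ _ => none
  src_mem := by decide
  tgt_mem := by decide

/-- Collapse `Gbad` onto `Ggood`. -/
def g1 : Obj → Obj := fun o => if o = 2 then 1 else if o = 5 then 4 else o
/-- First section of the collapse. -/
def m1 : Obj → Obj := fun o => o
/-- Second section of the collapse. -/
def m2 : Obj → Obj := fun o => if o = 1 then 2 else if o = 4 then 5 else o

section Maps

variable {G1 G2 : PGraph} {g : Obj → Obj}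

lemma map_walkFrom
    (hV : ∀ o ∈ G1.V, g o ∈ G2.V)
    (hE : ∀ e ∈ G1.E, g e ∈ G2.E)
    (hsrc : ∀ e ∈ G1.E, G2.src (g e) = g (G1.src e))
    (htgt : ∀ e ∈ G1.E, G2.tgt (g e) = g (G1.tgt e)) :
    ∀ (es : List Obj) (u : Obj), G1.walkFrom u es → G2.walkFrom (g u) (es.map g) := by
  intro es
  induction es with
  | nil => intro u h; exact hV u h
  | cons e es ih =>
    intro u h
    obtain ⟨he, hs, hrest⟩ := h
    refine ⟨hE e he, by rw [hsrc e he, hs], ?_⟩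
    rw [htgt e he]
    exact ih _ hrest

lemma map_endpt
    (htgt : ∀ e ∈ G1.E, G2.tgt (g e) = g (G1.tgt e)) :
    ∀ (es : List Obj) (u : Obj), G1.walkFrom u es →
      Walk.endpt G2 ⟨g u, es.map g⟩ = g (Walk.endpt G1 ⟨u, es⟩) := by
  intro es
  induction es with
  | nil => intro u _; rfl
  | cons e es ih =>
    intro u h
    obtain ⟨he, _, hrest⟩ := h
    show Walk.endpt G2 ⟨G2.tgt (g e), es.map g⟩ = g (Walk.endpt G1 ⟨G1.tgt e, es⟩)
    rw [htgt e he]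
    exact ih _ hrest

lemma map_atom
    (hV : ∀ o ∈ G1.V, g o ∈ G2.V)
    (hE : ∀ e ∈ G1.E, g e ∈ G2.E)
    (hsrc : ∀ e ∈ G1.E, G2.src (g e) = g (G1.src e))
    (htgt : ∀ e ∈ G1.E, G2.tgt (g e) = g (G1.tgt e))
    (hlab : ∀ o, G1.lab o = ∅)
    (a : Atom) (h : Var → Target) (hs : a.sat G1 h) :
    a.sat G2 (fun v => mapT g (h v)) := by
  cases a with
  | vertex x ls =>
    obtain ⟨o, hx, ho, hl⟩ := hs
    exact ⟨g o, congrArg (mapT g) hx, hV o ho,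
      fun l hl' => absurd (hlab o ▸ hl l hl') (Finset.notMem_empty l)⟩
  | edge x e y ls =>
    obtain ⟨ox, oe, oy, hx, he, hy, hmem, hs', ht', hl⟩ := hs
    exact ⟨g ox, g oe, g oy, congrArg (mapT g) hx, congrArg (mapT g) he, congrArg (mapT g) hy,
      hE oe hmem, by rw [hsrc oe hmem, hs'], by rw [htgt oe hmem, ht'],
      fun l hl' => absurd (hlab oe ▸ hl l hl') (Finset.notMem_empty l)⟩
  | path x p y r =>
    obtain ⟨ox, w, oy, hx, hp, hy, hst, hwalk, hend, word, hword, hforall⟩ := hs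
    have hwalk' : G1.walkFrom w.start w.edges := by rw [hst]; exact hwalk
    refine ⟨g ox, ⟨g w.start, w.edges.map g⟩, g oy, congrArg (mapT g) hx, congrArg (mapT g) hp,
      congrArg (mapT g) hy, by show g w.start = g ox; rw [hst],
      map_walkFrom hV hE hsrc htgt w.edges ox hwalk, ?_, word, hword, ?_⟩
    · have h2 := map_endpt (G1 := G1) (G2 := G2) htgt w.edges w.start hwalk'
      show Walk.endpt G2 ⟨g w.start, w.edges.map g⟩ = g oy
      rw [h2, show Walk.endpt G1 ⟨w.start, w.edges⟩ = oy from hend]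
    · have hnil : w.edges = [] := by
        cases hfe : w.edges with
        | nil => rfl
        | cons a l =>
          rw [hfe] at hforall
          cases hforall with
          | cons h1 _ => exact absurd (hlab _ ▸ h1) (Finset.notMem_empty _)
      have hword2 : word = [] := List.forall₂_nil_left_iff.mp (hnil ▸ hforall)
      show List.Forall₂ _ ((⟨g w.start, w.edges.map g⟩ : Walk).edges) word
      rw [hword2, show (⟨g w.start, w.edges.map g⟩ : Walk).edges = [] from by rw [hnil]; rfl]
      exact List.Forall₂.nil

lemma map_match
    (hV : ∀ o ∈ G1.V, g o ∈ G2.V)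
    (hE : ∀ e ∈ G1.E, g e ∈ G2.E)
    (hsrc : ∀ e ∈ G1.E, G2.src (g e) = g (G1.src e))
    (htgt : ∀ e ∈ G1.E, G2.tgt (g e) = g (G1.tgt e))
    (hlab : ∀ o, G1.lab o = ∅)
    (Q : Query) (h : Var → Target) (hm : Match G1 Q h) :
    Match G2 Q (fun v => mapT g (h v)) :=
  fun a ha => map_atom hV hE hsrc htgt hlab a h (hm a ha)

lemma propOf_none (hprop : ∀ o k, G1.prop o k = none) (h : Var → Target) (x : Var) (a : Key) :
    propOf G1 h x a = none := by
  unfold propOf; cases h x <;> simp [hprop]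

lemma map_pred
    (hprop : ∀ o k, G1.prop o k = none)
    (p : Pred) (hiso : p.isEq) (h : Var → Target) (hs : p.sat G1 h) :
    p.sat G2 (fun v => mapT g (h v)) := by
  cases p with
  | propEq x a y b =>
    obtain ⟨v, hv, _⟩ := hs
    rw [propOf_none hprop] at hv; exact absurd hv (by simp)
  | propEqC x a c =>
    rw [Pred.sat, propOf_none hprop] at hs; exact absurd hs (by simp)
  | ex x a =>
    rw [Pred.sat, propOf_none hprop] at hs; exact absurd hs (by simp)
  | idEq x y =>
    show mapT g (h x) = mapT g (h y)
    exact congrArg _ hs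
  | propNe x a y b => exact hiso.elim
  | propNeC x a c => exact hiso.elim
  | idNe x y => exact hiso.elim

lemma map_satC
    (hprop : ∀ o k, G1.prop o k = none)
    (C : List Pred) (hC : ∀ p ∈ C, Pred.isEq p) (h : Var → Target) (hs : satC G1 h C) :
    satC G2 (fun v => mapT g (h v)) C :=
  fun p hp => map_pred hprop p (hC p hp) h (hs p hp)

lemma map_keysDefined
    (hprop : ∀ o k, G1.prop o k = none)
    (ks : List KeyExpr) (h : Var → Target) (hs : keysDefined G1 h ks) :
    keysDefined G2 (fun v => mapT g (h v)) ks := by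
  intro k hk
  cases k with
  | var v => simp [KeyExpr.eval]
  | ref v a =>
    have := hs _ hk
    rw [KeyExpr.eval, propOf_none hprop] at this
    exact absurd this (by simp)

end Maps

lemma walkFrom_start_mem {G : PGraph} {u : Obj} {es : List Obj}
    (h : G.walkFrom u es) : u ∈ G.V := by
  cases es with
  | nil => exact h
  | cons e es => obtain ⟨he, hs, _⟩ := h; exact hs ▸ G.src_mem e he

lemma walkFrom_endpt_mem {G : PGraph} :
    ∀ {es : List Obj} {u : Obj}, G.walkFrom u es → Walk.endpt G ⟨u, es⟩ ∈ G.V := by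
  intro es
  induction es with
  | nil => intro u h; exact h
  | cons e es ih =>
    intro u h
    obtain ⟨he, _, hrest⟩ := h
    exact ih hrest

/-- Targets of variables occurring in a matched query are valid. -/
lemma valid_of_match {G : PGraph} {Q : Query} {h : Var → Target}
    (hm : Match G Q h) {x : Var} (hx : x ∈ qvars Q) :
    (∃ o, h x = .obj o ∧ (o ∈ G.V ∨ o ∈ G.E)) ∨
    (∃ w, h x = .walk w ∧ G.walkFrom w.start w.edges) := by
  induction Q with
  | nil => simp [qvars] at hx
  | cons a Q ih =>
    rw [show qvars (a :: Q) = a.vars ∪ qvars Q from rfl, Finset.mem_union] at hx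
    rcases hx with hx | hx
    · have hs := hm a (by simp)
      cases a with
      | vertex y ls =>
        obtain ⟨o, hy, ho, _⟩ := hs
        simp [Atom.vars] at hx
        subst hx
        exact Or.inl ⟨o, hy, Or.inl ho⟩
      | edge y e z ls =>
        obtain ⟨ox, oe, oy, hy, he, hz, hmem, hsrc, htgt, _⟩ := hs
        simp [Atom.vars, Finset.mem_insert] at hx
        rcases hx with rfl | rfl | rfl
        · exact Or.inl ⟨ox, hy, Or.inl (hsrc ▸ G.src_mem oe hmem)⟩
        · exact Or.inl ⟨oe, he, Or.inr hmem⟩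
        · exact Or.inl ⟨oy, hz, Or.inl (htgt ▸ G.tgt_mem oe hmem)⟩
      | path y p z r =>
        obtain ⟨ox, w, oy, hy, hp, hz, hst, hwalk, hend, _⟩ := hs
        simp [Atom.vars, Finset.mem_insert] at hx
        rcases hx with rfl | rfl | rfl
        · exact Or.inl ⟨ox, hy, Or.inl (walkFrom_start_mem hwalk)⟩
        · exact Or.inr ⟨w, hp, by rw [hst]; exact hwalk⟩
        · refine Or.inl ⟨oy, hz, Or.inl ?_⟩
          rw [← hend, show w = ⟨w.start, w.edges⟩ from rfl, hst]
          exact walkFrom_endpt_mem hwalk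
    · exact ih (fun a' ha' => hm a' (List.mem_cons_of_mem _ ha')) hx

/-- The anchoring lemma: every valid target of `Gbad` is recovered by one of the
two sections after collapsing. -/
lemma anchor (t : Target)
    (hv : (∃ o, t = .obj o ∧ (o ∈ Gbad.V ∨ o ∈ Gbad.E)) ∨
          (∃ w, t = .walk w ∧ Gbad.walkFrom w.start w.edges)) :
    mapT m1 (mapT g1 t) = t ∨ mapT m2 (mapT g1 t) = t := by
  rcases hv with ⟨o, rfl, ho⟩ | ⟨w, rfl, hw⟩
  · have : o = 0 ∨ o = 1 ∨ o = 2 ∨ o = 4 ∨ o = 5 := by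
      rcases ho with ho | ho <;> simp [Gbad] at ho <;> tauto
    rcases this with rfl | rfl | rfl | rfl | rfl <;> simp [mapT, g1, m1, m2]
  · obtain ⟨st, es⟩ := w
    cases es with
    | nil =>
      have hst : st ∈ Gbad.V := hw
      have : st = 0 ∨ st = 1 ∨ st = 2 := by simp [Gbad] at hst; tauto
      rcases this with rfl | rfl | rfl <;> simp [mapT, g1, m1, m2]
    | cons e es =>
      obtain ⟨he, hsrc, hrest⟩ := hw
      have he' : e = 4 ∨ e = 5 := by simp [Gbad] at he; tauto
      have hst : st = 0 := by
        have : Gbad.src e = st := hsrc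
        simpa [Gbad] using this.symm
      subst hst
      cases es with
      | nil =>
        rcases he' with rfl | rfl <;> simp [mapT, g1, m1, m2]
      | cons e' es' =>
        obtain ⟨he2, hsrc2, _⟩ := hrest
        exfalso
        have h0 : Gbad.src e' = (0 : Obj) := rfl
        rcases he' with rfl | rfl <;> rw [h0] at hsrc2 <;> simp [Gbad] at hsrc2

/-- Transfer of MANDATORY keys over CRPQ[=] from `Ggood` to `Gbad`. -/
lemma transfer (κ : PGKey) (hwf : κ.wf CRPQeq) (hkw : κ.kw = KW.mandatory)
    (hg : κ.sat Ggood) : κ.sat Gbad := by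
  obtain ⟨hQs, hQt, hCs, hCt, hxQs, hxQt, _, _, _, _⟩ := hwf
  unfold PGKey.sat at hg ⊢
  rw [hkw] at hg ⊢
  intro hs hms hcs
  -- hypotheses about g1
  have hV1 : ∀ o ∈ Gbad.V, g1 o ∈ Ggood.V := by decide
  have hE1 : ∀ e ∈ Gbad.E, g1 e ∈ Ggood.E := by decide
  have hsrc1 : ∀ e ∈ Gbad.E, Ggood.src (g1 e) = g1 (Gbad.src e) := by decide
  have htgt1 : ∀ e ∈ Gbad.E, Ggood.tgt (g1 e) = g1 (Gbad.tgt e) := by decide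
  have hlabB : ∀ o, Gbad.lab o = ∅ := fun _ => rfl
  have hpropB : ∀ o k, Gbad.prop o k = none := fun _ _ => rfl
  have hlabG : ∀ o, Ggood.lab o = ∅ := fun _ => rfl
  have hpropG : ∀ o k, Ggood.prop o k = none := fun _ _ => rfl
  -- collapsed scope match
  have hms' : Match Ggood κ.Qs (fun v => mapT g1 (hs v)) :=
    map_match hV1 hE1 hsrc1 htgt1 hlabB κ.Qs hs hms
  have hcs' : satC Ggood (fun v => mapT g1 (hs v)) κ.Cs :=
    map_satC hpropB κ.Cs hCs hs hcs
  obtain ⟨ht, hmt, hanc, hct, hkd⟩ := hg _ hms' hcs'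
  -- choose the right section
  have hvalid := valid_of_match hms hxQs
  rcases anchor (hs κ.x) hvalid with hfix | hfix
  · have hV : ∀ o ∈ Ggood.V, m1 o ∈ Gbad.V := by decide
    have hE : ∀ e ∈ Ggood.E, m1 e ∈ Gbad.E := by decide
    have hsrc : ∀ e ∈ Ggood.E, Gbad.src (m1 e) = m1 (Ggood.src e) := by decide
    have htgt : ∀ e ∈ Ggood.E, Gbad.tgt (m1 e) = m1 (Ggood.tgt e) := by decide
    refine ⟨fun v => mapT m1 (ht v), map_match hV hE hsrc htgt hlabG κ.Qt ht hmt,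
      ?_, map_satC hpropG κ.Ct hCt ht hct, map_keysDefined hpropG κ.keys ht hkd⟩
    show mapT m1 (ht κ.x) = hs κ.x
    rw [hanc]; exact hfix
  · have hV : ∀ o ∈ Ggood.V, m2 o ∈ Gbad.V := by decide
    have hE : ∀ e ∈ Ggood.E, m2 e ∈ Gbad.E := by decide
    have hsrc : ∀ e ∈ Ggood.E, Gbad.src (m2 e) = m2 (Ggood.src e) := by decide
    have htgt : ∀ e ∈ Ggood.E, Gbad.tgt (m2 e) = m2 (Ggood.tgt e) := by decide
    refine ⟨fun v => mapT m2 (ht v), map_match hV hE hsrc htgt hlabG κ.Qt ht hmt,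
      ?_, map_satC hpropG κ.Ct hCt ht hct, map_keysDefined hpropG κ.keys ht hkd⟩
    show mapT m2 (ht κ.x) = hs κ.x
    rw [hanc]; exact hfix

lemma good_sat : singletonKey.sat Ggood := by
  unfold PGKey.sat singletonKey
  intro hs _ _ ht ht' hmt _ _ hmt' _ _ _ _
  have h1 := hmt (Atom.edge 0 2 1 []) (by simp)
  have h2 := hmt' (Atom.edge 0 2 1 []) (by simp)
  obtain ⟨ox, oe, oy, _, _, hy, hmem, _, htg, _⟩ := h1
  obtain ⟨ox', oe', oy', _, _, hy', hmem', _, htg', _⟩ := h2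
  intro k hk
  simp at hk
  subst hk
  show KeyExpr.eval Ggood ht (.var 1) = KeyExpr.eval Ggood ht' (.var 1)
  simp only [KeyExpr.eval]
  rw [hy, hy', ← htg, ← htg']; rfl

lemma bad_not_sat : ¬ singletonKey.sat Gbad := by
  unfold PGKey.sat singletonKey
  intro h
  have hkey := h (fun _ => .obj 0)
    (by
      intro a ha
      simp at ha
      subst ha
      exact ⟨0, rfl, by decide, by simp⟩)
    (by intro p hp; simp at hp)
    (fun v => if v = 2 then .obj 4 else if v = 1 then .obj 1 else .obj 0)
    (fun v => if v = 2 then .obj 5 else if v = 1 then .obj 2 else .obj 0)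
    (by
      intro a ha
      simp at ha
      subst ha
      exact ⟨0, 4, 1, rfl, rfl, rfl, by decide, rfl, rfl, by simp⟩)
    (by intro p hp; simp at hp)
    rfl
    (by
      intro a ha
      simp at ha
      subst ha
      refine ⟨0, 5, 2, rfl, rfl, rfl, by decide, rfl, ?_, by simp⟩
      show Gbad.tgt 5 = 2
      decide)
    (by intro p hp; simp at hp)
    rfl
    (by intro k hk; simp at hk; subst hk; simp [KeyExpr.eval])
    (by intro k hk; simp at hk; subst hk; simp [KeyExpr.eval])
  have := hkey (.var 1) (by simp)
  simp [KeyExpr.eval] at this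

lemma singletonKey_wf : singletonKey.wf CRPQeq := by
  refine ⟨?_, ?_, ?_, ?_, ?_, ?_, ?_, ?_, ?_, ?_⟩
  · intro a ha; simp [singletonKey] at ha; subst ha; intro h; exact h.elim
  · intro a ha; simp [singletonKey] at ha; subst ha; intro h; exact h.elim
  · intro p hp; simp [singletonKey] at hp
  · intro p hp; simp [singletonKey] at hp
  · decide
  · decide
  · decide
  · intro p hp; simp [singletonKey] at hp
  · intro p hp; simp [singletonKey] at hp
  · intro k hk; simp [singletonKey] at hk; subst hk; decide


/-- over CRPQ[=], some PG-Keys are not expressible in mPG-Keys; in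
particular `(x, ∅ ⇒ SINGLETON(y), x → y, ∅)`. -/
theorem pgkeys_not_in_mpgkeys_crpq_eq :
    singletonKey.wf CRPQeq ∧
    singletonKey.sat ∈ PGKc CRPQeq ∧
    ¬ Expressible singletonKey.sat (mPGKc CRPQeq) ∧
    ∃ s ∈ PGKc CRPQeq, ¬ Expressible s (mPGKc CRPQeq) := by
  have hnex : ¬ Expressible singletonKey.sat (mPGKc CRPQeq) := by
    rintro ⟨Ψ, hΨ, hiff⟩
    have hgood := (hiff Ggood).mp good_sat
    have hbadall : ¬ ∀ ψ ∈ Ψ, ψ Gbad := fun h => bad_not_sat ((hiff Gbad).mpr h)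
    push_neg at hbadall
    obtain ⟨ψ, hψΨ, hψbad⟩ := hbadall
    obtain ⟨κ, hκwf, hκkw, rfl⟩ := hΨ ψ hψΨ
    exact hψbad (transfer κ hκwf hκkw (hgood _ hψΨ))
  exact ⟨singletonKey_wf, ⟨singletonKey, singletonKey_wf, rfl⟩, hnex,
    singletonKey.sat, ⟨singletonKey, singletonKey_wf, rfl⟩, hnex⟩

end PGC
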